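/- Let P and Q be probability measures on [1/2 - r, 1/2 + r] ⊆ [0,1] whose first L moments match, and let X | p ~ Binomial(t, p) with p ~ P, and Y | q ~ Binomial(t, q) with q ~ Q. Then the total variation distance between the laws of X and Y satisfies TV(X,Y) ≤ 2 Σ_{k=L+1}^∞ (Σ_{j=0}^t |B_j^{(k)}(1/2)/k!|) r^k, where B_j is the j-th Bernstein polynomial of degree t. -/

import Mathlib

/-!
Each Bernstein polynomial `B_j` equals its finite Taylor expansion around `1/2`, so
`E_P[B_j] - E_Q[B_j]` is a combination of differences of centered moments `E[(p - 1/2)^k]`.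
Centered moments of order at most `L` are combinations of raw moments of order at most `L`, hence
agree for `P` and `Q`; every other centered moment is at most `r^k` in absolute value because both
measures live on `[1/2 - r, 1/2 + r]`.
-/

open MeasureTheory

/-- The `j`-th Bernstein basis polynomial of degree `t`. -/
noncomputable def bern (t j : ℕ) (x : ℝ) : ℝ := (t.choose j : ℝ) * x ^ j * (1 - x) ^ (t - j)

open Polynomial Finset
open scoped Nat

namespace Polynomial

variable {𝕜 : Type*} [NontriviallyNormedField 𝕜]

theorem iteratedDeriv_eval (f : 𝕜[X]) (k : ℕ) :
    iteratedDeriv k (fun x => f.eval x) = fun x => (derivative^[k] f).eval x := by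
  induction k with
  | zero => simp
  | succ k ih =>
    rw [iteratedDeriv_succ, ih, Function.iterate_succ_apply']
    funext x
    exact Polynomial.deriv _

theorem iteratedDeriv_eval_eq_zero_of_natDegree_lt {f : 𝕜[X]} {k : ℕ} (hk : f.natDegree < k)
    (x : 𝕜) : iteratedDeriv k (fun x => f.eval x) x = 0 := by
  simp [iteratedDeriv_eval, iterate_derivative_eq_zero hk]

theorem taylor_coeff_eq_iteratedDeriv_div_factorial [CharZero 𝕜] (f : 𝕜[X]) (a : 𝕜) (k : ℕ) :
    (taylor a f).coeff k = iteratedDeriv k (fun x => f.eval x) a / k ! := by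
  rw [taylor_coeff, iteratedDeriv_eval, ← factorial_smul_hasseDeriv,
    eq_div_iff (Nat.cast_ne_zero.mpr k.factorial_ne_zero)]
  simp [nsmul_eq_mul, mul_comm]

theorem eval_eq_sum_range_iteratedDeriv [CharZero 𝕜] {f : 𝕜[X]} {n : ℕ} (hn : f.natDegree < n)
    (a x : 𝕜) :
    f.eval x = ∑ k ∈ range n, iteratedDeriv k (fun x => f.eval x) a / k ! * (x - a) ^ k := by
  rw [← taylor_eval_sub a, eval_eq_sum_range' (by rwa [natDegree_taylor])]
  simp_rw [taylor_coeff_eq_iteratedDeriv_div_factorial]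

end Polynomial

theorem bernsteinPolynomial.natDegree_le (R : Type*) [CommRing R] (n ν : ℕ) :
    (bernsteinPolynomial R n ν).natDegree ≤ n := by
  rcases le_or_gt ν n with h | h
  · unfold bernsteinPolynomial
    compute_degree
    omega
  · simp [bernsteinPolynomial.eq_zero_of_lt R h]

theorem bern_eq_eval_bernsteinPolynomial (t j : ℕ) :
    bern t j = fun x => (bernsteinPolynomial ℝ t j).eval x := by
  ext x
  simp [bern, bernsteinPolynomial]

theorem Continuous.integrable_of_ae_mem_isCompact {X : Type*} [TopologicalSpace X]
    [MeasurableSpace X] [OpensMeasurableSpace X] [SecondCountableTopology X] {μ : Measure X}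
    [IsFiniteMeasure μ] {K : Set X} (hK : IsCompact K) (hμ : ∀ᵐ x ∂μ, x ∈ K) {f : X → ℝ}
    (hf : Continuous f) : Integrable f μ := by
  obtain ⟨C, hC⟩ := hK.exists_bound_of_continuousOn hf.continuousOn
  exact Integrable.of_bound hf.aestronglyMeasurable C (hμ.mono hC)

section Moments

variable {μ ν : Measure ℝ} {K : Set ℝ} {a r : ℝ}

theorem integral_eval_eq_of_integral_pow_eq [IsFiniteMeasure μ] [IsFiniteMeasure ν]
    (hK : IsCompact K) (hμ : ∀ᵐ x ∂μ, x ∈ K) (hν : ∀ᵐ x ∂ν, x ∈ K) {L : ℕ}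
    (hmom : ∀ l ≤ L, ∫ x, x ^ l ∂μ = ∫ x, x ^ l ∂ν) {g : ℝ[X]} (hg : g.natDegree ≤ L) :
    ∫ x, g.eval x ∂μ = ∫ x, g.eval x ∂ν := by
  have hint : ∀ {ρ : Measure ℝ} [IsFiniteMeasure ρ], (∀ᵐ x ∂ρ, x ∈ K) →
      ∫ x, g.eval x ∂ρ = ∑ l ∈ range (L + 1), g.coeff l * ∫ x, x ^ l ∂ρ := fun hρ => by
    simp_rw [eval_eq_sum_range' (Nat.lt_add_one_of_le hg)]
    rw [integral_finsetSum _ fun l _ =>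
      Continuous.integrable_of_ae_mem_isCompact hK hρ (by fun_prop)]
    simp_rw [integral_const_mul]
  rw [hint hμ, hint hν]
  exact sum_congr rfl fun l hl => by rw [hmom l (Nat.lt_succ_iff.mp (mem_range.mp hl))]

theorem abs_integral_sub_pow_le [IsProbabilityMeasure μ]
    (hμ : ∀ᵐ x ∂μ, x ∈ Set.Icc (a - r) (a + r)) (k : ℕ) : |∫ x, (x - a) ^ k ∂μ| ≤ r ^ k := by
  have hbound : ∀ᵐ x ∂μ, ‖(x - a) ^ k‖ ≤ r ^ k := hμ.mono fun x hx => by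
    rw [Real.norm_eq_abs, abs_pow]
    exact pow_le_pow_left₀ (abs_nonneg _)
      (abs_sub_le_iff.mpr ⟨by linarith [hx.2], by linarith [hx.1]⟩) k
  simpa using norm_integral_le_of_norm_le_const hbound

theorem abs_integral_eval_sub_le_of_integral_pow_eq [IsProbabilityMeasure μ]
    [IsProbabilityMeasure ν] (hμ : ∀ᵐ x ∂μ, x ∈ Set.Icc (a - r) (a + r))
    (hν : ∀ᵐ x ∂ν, x ∈ Set.Icc (a - r) (a + r)) {L : ℕ}
    (hmom : ∀ l ≤ L, ∫ x, x ^ l ∂μ = ∫ x, x ^ l ∂ν) {f : ℝ[X]} {n : ℕ} (hn : f.natDegree < n) :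
    |∫ x, f.eval x ∂μ - ∫ x, f.eval x ∂ν| ≤
      2 * ∑ k ∈ Ico (L + 1) n, |iteratedDeriv k (fun x => f.eval x) a / k !| * r ^ k := by
  set c : ℕ → ℝ := fun k => iteratedDeriv k (fun x => f.eval x) a / (k ! : ℝ)
  have hK : IsCompact (Set.Icc (a - r) (a + r)) := isCompact_Icc
  have hexpand : ∀ {ρ : Measure ℝ} [IsFiniteMeasure ρ], (∀ᵐ x ∂ρ, x ∈ Set.Icc (a - r) (a + r)) →
      ∫ x, f.eval x ∂ρ = ∑ k ∈ range n, c k * ∫ x, (x - a) ^ k ∂ρ := fun hρ => by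
    conv_lhs => enter [2, x]; rw [eval_eq_sum_range_iteratedDeriv hn a]
    rw [integral_finsetSum _ fun k _ =>
      Continuous.integrable_of_ae_mem_isCompact hK hρ (by fun_prop)]
    simp_rw [integral_const_mul]
    rfl
  have hlow : ∀ k ≤ L, ∫ x, (x - a) ^ k ∂μ = ∫ x, (x - a) ^ k ∂ν := fun k hk => by
    simpa using integral_eval_eq_of_integral_pow_eq hK hμ hν hmom (g := (X - C a) ^ k)
      ((natDegree_pow_le_of_le k (natDegree_X_sub_C_le a)).trans (by omega))
  have hdiff : ∫ x, f.eval x ∂μ - ∫ x, f.eval x ∂ν =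
      ∑ k ∈ Ico (L + 1) n, c k * (∫ x, (x - a) ^ k ∂μ - ∫ x, (x - a) ^ k ∂ν) := by
    rw [hexpand hμ, hexpand hν, ← sum_sub_distrib]
    simp_rw [← mul_sub]
    refine (sum_subset (fun k hk => ?_) fun k hk hk' => ?_).symm
    · simp only [mem_Ico, mem_range] at hk ⊢
      omega
    · simp only [mem_Ico, mem_range, not_and, not_lt] at hk hk'
      rw [hlow k (by omega), sub_self, mul_zero]
  rw [hdiff, mul_sum]
  refine (abs_sum_le_sum_abs _ _).trans (sum_le_sum fun k _ => ?_)
  rw [abs_mul]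
  calc |c k| * |∫ x, (x - a) ^ k ∂μ - ∫ x, (x - a) ^ k ∂ν| ≤ |c k| * (r ^ k + r ^ k) := by
        gcongr
        exact (abs_sub _ _).trans <|
          add_le_add (abs_integral_sub_pow_le hμ k) (abs_integral_sub_pow_le hν k)
    _ = 2 * (|c k| * r ^ k) := by ring

end Moments

theorem sum_Ico_le_tsum_nat_add {g : ℕ → ℝ} (hg : ∀ k, 0 ≤ g k) {m n : ℕ}
    (hn : ∀ k, n ≤ k → g k = 0) : ∑ k ∈ Ico m n, g k ≤ ∑' k, g (k + m) := by
  rw [sum_Ico_eq_sum_range]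
  simp_rw [add_comm m]
  refine Summable.sum_le_tsum _ (fun k _ => hg _) (summable_of_ne_finset_zero (s := range n) ?_)
  intro k hk
  exact hn _ (by simp only [mem_range, not_lt] at hk; omega)

theorem tv_fingerprint_taylor_bound_general (t L : ℕ) (r : ℝ) (hr0 : 0 ≤ r)
    (P Q : Measure ℝ) [IsProbabilityMeasure P] [IsProbabilityMeasure Q]
    (hP : P ((Set.Icc (1 / 2 - r) (1 / 2 + r))ᶜ) = 0)
    (hQ : Q ((Set.Icc (1 / 2 - r) (1 / 2 + r))ᶜ) = 0)
    (hmom : ∀ l : ℕ, 1 ≤ l → l ≤ L → ∫ p, p ^ l ∂P = ∫ q, q ^ l ∂Q) :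
    ∑ s ∈ Finset.range (t + 1), |(∫ p, bern t s p ∂P) - ∫ q, bern t s q ∂Q|
      ≤ 2 * ∑' k : ℕ,
          (∑ j ∈ Finset.range (t + 1),
              |iteratedDeriv (k + L + 1) (bern t j) (1 / 2) / ((k + L + 1).factorial : ℝ)|)
            * r ^ (k + L + 1) := by
  have hmom_le : ∀ l ≤ L, ∫ p, p ^ l ∂P = ∫ q, q ^ l ∂Q := fun l hl => by
    rcases l.eq_zero_or_pos with rfl | hl0
    · simp
    · exact hmom l hl0 hl
  have hdeg : ∀ j, (bernsteinPolynomial ℝ t j).natDegree < t + 1 := fun j =>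
    Nat.lt_add_one_of_le (bernsteinPolynomial.natDegree_le ℝ t j)
  simp only [bern_eq_eval_bernsteinPolynomial]
  set c : ℕ → ℕ → ℝ := fun k j =>
    |iteratedDeriv k (fun x => (bernsteinPolynomial ℝ t j).eval x) (1 / 2) / k !|
  calc _ ≤ ∑ s ∈ range (t + 1), 2 * ∑ k ∈ Ico (L + 1) (t + 1), c k s * r ^ k :=
        sum_le_sum fun s _ => abs_integral_eval_sub_le_of_integral_pow_eq
          (ae_iff.mpr hP) (ae_iff.mpr hQ) hmom_le (hdeg s)
    _ = 2 * ∑ k ∈ Ico (L + 1) (t + 1), (∑ j ∈ range (t + 1), c k j) * r ^ k := by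
        rw [← mul_sum, sum_comm]
        simp_rw [sum_mul]
    _ ≤ _ := by
        gcongr
        refine sum_Ico_le_tsum_nat_add (fun k => by positivity) fun k hk => ?_
        simp [c, iteratedDeriv_eval_eq_zero_of_natDegree_lt ((hdeg _).trans_le hk)]

theorem tv_fingerprint_taylor_bound (t L : ℕ) (r : ℝ) (hr0 : 0 ≤ r) (hr : r ≤ 1 / 2)
    (P Q : Measure ℝ) [IsProbabilityMeasure P] [IsProbabilityMeasure Q]
    (hP : P ((Set.Icc (1 / 2 - r) (1 / 2 + r))ᶜ) = 0)
    (hQ : Q ((Set.Icc (1 / 2 - r) (1 / 2 + r))ᶜ) = 0)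
    (hmom : ∀ l : ℕ, 1 ≤ l → l ≤ L → ∫ p, p ^ l ∂P = ∫ q, q ^ l ∂Q) :
    ∑ s ∈ Finset.range (t + 1), |(∫ p, bern t s p ∂P) - ∫ q, bern t s q ∂Q|
      ≤ 2 * ∑' k : ℕ,
          (∑ j ∈ Finset.range (t + 1),
              |iteratedDeriv (k + L + 1) (bern t j) (1 / 2) / ((k + L + 1).factorial : ℝ)|)
            * r ^ (k + L + 1) :=
  tv_fingerprint_taylor_bound_general t L r hr0 P Q hP hQ hmom
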